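/- Let B ~ Binomial(S, L/M) with L < M, and define F(S) = ∑_{s=0}^S P(B=s)·log₂(1 + (s·M²/L·β_r + β_d)·ρ) for positive constants β_r, β_d, ρ. Then F(S) is monotonically increasing in S. -/

import Mathlib

/-!
Conditioning on the last trial, `B_{S+1}` is `B_S` with probability `1 - p` and `B_S + 1` with
probability `p`, so `E f(B_{S+1}) = (1 - p) E f(B_S) + p E f(B_S + 1) ≥ E f(B_S)` for every
increasing `f`; here `f s = log₂(1 + (s M²/L β_r + β_d) ρ)` is increasing in `s`.
-/

open Real Finset

section Binomial

variable {R : Type*} [CommRing R]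

def binomialWeight (p : R) (n s : ℕ) : R :=
  (n.choose s : R) * p ^ s * (1 - p) ^ (n - s)

def binomialExpectation (p : R) (n : ℕ) (f : ℕ → R) : R :=
  ∑ s ∈ range (n + 1), binomialWeight p n s * f s

theorem binomialWeight_succ_zero (p : R) (n : ℕ) :
    binomialWeight p (n + 1) 0 = (1 - p) * binomialWeight p n 0 := by
  simp [binomialWeight, pow_succ, mul_comm]

/-- The truncated subtraction in `n - s` is harmless: `n.choose (s + 1)` vanishes whenever it
bites. -/
theorem binomialWeight_succ_succ (p : R) (n s : ℕ) :
    binomialWeight p (n + 1) (s + 1) =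
      p * binomialWeight p n s + (1 - p) * binomialWeight p n (s + 1) := by
  unfold binomialWeight
  rw [Nat.choose_succ_succ', Nat.cast_add, Nat.add_sub_add_right]
  rcases Nat.lt_or_ge s n with hs | hs
  · obtain ⟨k, rfl⟩ := Nat.exists_eq_add_of_lt hs
    rw [show s + k + 1 - s = k + 1 by omega, show s + k + 1 - (s + 1) = k by omega]
    ring
  · rw [Nat.choose_eq_zero_of_lt (by omega : n < s + 1), Nat.sub_eq_zero_of_le hs]
    ring

theorem binomialExpectation_succ (p : R) (n : ℕ) (f : ℕ → R) :
    binomialExpectation p (n + 1) f =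
      (1 - p) * binomialExpectation p n f + p * binomialExpectation p n (fun s => f (s + 1)) := by
  have htop : binomialWeight p n (n + 1) = 0 := by
    simp [binomialWeight, Nat.choose_succ_self]
  have hshift : binomialExpectation p n f =
      binomialWeight p n 0 * f 0 + ∑ s ∈ range (n + 1), binomialWeight p n (s + 1) * f (s + 1) := by
    rw [add_comm, ← sum_range_succ' (fun s => binomialWeight p n s * f s), sum_range_succ, htop,
      zero_mul, add_zero, binomialExpectation]
  rw [hshift, binomialExpectation, sum_range_succ', binomialWeight_succ_zero]
  simp only [binomialExpectation, binomialWeight_succ_succ, add_mul, sum_add_distrib, mul_add,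
    mul_sum, mul_assoc]
  ring

end Binomial

section Monotone

variable {R : Type*} [CommRing R] [PartialOrder R] [IsOrderedRing R] {p : R}

theorem binomialWeight_nonneg (hp₀ : 0 ≤ p) (hp₁ : p ≤ 1) (n s : ℕ) : 0 ≤ binomialWeight p n s :=
  mul_nonneg (mul_nonneg (Nat.cast_nonneg _) (pow_nonneg hp₀ _)) (pow_nonneg (sub_nonneg.2 hp₁) _)

theorem binomialExpectation_mono (hp₀ : 0 ≤ p) (hp₁ : p ≤ 1) (n : ℕ) {f g : ℕ → R}
    (hfg : f ≤ g) : binomialExpectation p n f ≤ binomialExpectation p n g :=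
  sum_le_sum fun s _ => mul_le_mul_of_nonneg_left (hfg s) (binomialWeight_nonneg hp₀ hp₁ n s)

theorem monotone_binomialExpectation (hp₀ : 0 ≤ p) (hp₁ : p ≤ 1) {f : ℕ → R}
    (hf : Monotone f) : Monotone fun n => binomialExpectation p n f := by
  refine monotone_nat_of_le_succ fun n => ?_
  have hstep : binomialExpectation p n f ≤ binomialExpectation p n (fun s => f (s + 1)) :=
    binomialExpectation_mono hp₀ hp₁ n fun s => hf s.le_succ
  calc binomialExpectation p n f
      = (1 - p) * binomialExpectation p n f + p * binomialExpectation p n f := by ring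
    _ ≤ (1 - p) * binomialExpectation p n f + p * binomialExpectation p n (fun s => f (s + 1)) :=
      add_le_add_right (mul_le_mul_of_nonneg_left hstep hp₀) _
    _ = binomialExpectation p (n + 1) f := (binomialExpectation_succ p n f).symm

end Monotone

theorem monotone_logb_one_add_affine {a b ρ : ℝ} (ha : 0 ≤ a) (hb : 0 ≤ b) (hρ : 0 ≤ ρ) :
    Monotone fun s : ℕ => logb 2 (1 + ((s : ℝ) * a + b) * ρ) := by
  intro s t hst
  have hst' : (s : ℝ) ≤ t := by exact_mod_cast hst
  apply logb_le_logb_of_le one_lt_two (by positivity)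
  gcongr

theorem stmt6_general (M L : ℕ) (hLM : L < M)
    (βr βd ρ : ℝ) (hβr : 0 < βr) (hβd : 0 < βd) (hρ : 0 < ρ) :
    Monotone (fun S : ℕ => ∑ s ∈ Finset.range (S + 1),
      (S.choose s : ℝ) * ((L : ℝ) / (M : ℝ)) ^ s * (1 - (L : ℝ) / (M : ℝ)) ^ (S - s) *
        Real.logb 2 (1 + ((s : ℝ) * (M : ℝ) ^ 2 / (L : ℝ) * βr + βd) * ρ)) := by
  have hp₁ : (L : ℝ) / M ≤ 1 := div_le_one_of_le₀ (by exact_mod_cast hLM.le) (Nat.cast_nonneg M)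
  have hlog : Monotone fun s : ℕ => logb 2 (1 + ((s : ℝ) * ((M : ℝ) ^ 2 / L * βr) + βd) * ρ) :=
    monotone_logb_one_add_affine (by positivity) hβd.le hρ.le
  simp only [← mul_div_assoc, ← mul_assoc] at hlog
  exact monotone_binomialExpectation (by positivity) hp₁ hlog

/-- For `B ~ Binomial(S, L/M)` with `L < M`,
`F(S) = ∑_{s=0}^S P(B=s)·log₂(1 + (sM²/L·β_r + β_d)ρ)` is monotonically increasing in `S`. -/
theorem stmt6 (M L : ℕ) (hL : 0 < L) (hLM : L < M)
    (βr βd ρ : ℝ) (hβr : 0 < βr) (hβd : 0 < βd) (hρ : 0 < ρ) :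
    Monotone (fun S : ℕ => ∑ s ∈ Finset.range (S + 1),
      (S.choose s : ℝ) * ((L : ℝ) / (M : ℝ)) ^ s * (1 - (L : ℝ) / (M : ℝ)) ^ (S - s) *
        Real.logb 2 (1 + ((s : ℝ) * (M : ℝ) ^ 2 / (L : ℝ) * βr + βd) * ρ)) :=
  stmt6_general M L hLM βr βd ρ hβr hβd hρ
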